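/- Let n ≥ 3 be an integer and s ∈ (0,2). With Φ(X) = (1 + |X|^{2-s})^{-(n-2)/(2-s)} and 2*(s) = 2(n-s)/(n-2), one has ∫_{ℝⁿ} |∇Φ|² dX = (n-2)(n-s) ∫_{ℝⁿ} |X|^{-s} Φ^{2*(s)} dX. -/

import Mathlib

/-!
Both integrands are radial, so polar coordinates turn each side into an integral over `(0, ∞)`
against `y ^ (n - 1)`. With `u = y ^ (2 - s)` and `α = 2 (n - s) / (2 - s)` the two radial
integrands are `(n - 2)² y ^ (n + 1 - 2s) (1 + u) ^ (-α)` and `y ^ (n - 1 - s) (1 + u) ^ (-α)`, and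
the identity between their integrals is an integration by parts against
`y ^ (n - s) (1 + u) ^ (1 - α)`, which vanishes at `0` and at `∞`.
-/

open MeasureTheory Set Real Filter

lemma one_add_rpow_rpow_neg_le {y q c : ℝ} (hy : 0 < y) (hc : 0 ≤ c) :
    (1 + y ^ q) ^ (-c) ≤ y ^ (-(q * c)) := by
  have hyq : 0 < y ^ q := rpow_pos_of_pos hy q
  calc (1 + y ^ q) ^ (-c) ≤ (y ^ q) ^ (-c) :=
        rpow_le_rpow_of_nonpos hyq (by linarith) (by linarith)
    _ = y ^ (-(q * c)) := by rw [← rpow_mul hy.le, mul_neg]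

lemma integrableOn_Ioi_rpow_mul_one_add_rpow_rpow_neg {p q b : ℝ} (hp : -1 < p) (hb : 0 ≤ b)
    (hpqb : p - q * b < -1) :
    IntegrableOn (fun y : ℝ => y ^ p * (1 + y ^ q) ^ (-b)) (Ioi 0) := by
  have hmeas : AEStronglyMeasurable (fun y : ℝ => y ^ p * (1 + y ^ q) ^ (-b)) :=
    (by measurability : Measurable fun y : ℝ => y ^ p * (1 + y ^ q) ^ (-b)).aestronglyMeasurable
  have near_zero : IntegrableOn (fun y : ℝ => y ^ p * (1 + y ^ q) ^ (-b)) (Ioc 0 1) := by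
    have hg : IntegrableOn (fun y : ℝ => y ^ p) (Ioc 0 1) :=
      (intervalIntegrable_iff_integrableOn_Ioc_of_le zero_le_one).1
        (intervalIntegral.intervalIntegrable_rpow' hp)
    refine hg.mono' hmeas.restrict ?_
    filter_upwards [ae_restrict_mem measurableSet_Ioc] with y ⟨hy, _⟩
    have hyq : 0 ≤ y ^ q := rpow_nonneg hy.le q
    rw [norm_of_nonneg (by positivity)]
    exact mul_le_of_le_one_right (rpow_nonneg hy.le p)
      (rpow_le_one_of_one_le_of_nonpos (by linarith) (by linarith))
  have near_top : IntegrableOn (fun y : ℝ => y ^ p * (1 + y ^ q) ^ (-b)) (Ioi 1) := by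
    have hg : IntegrableOn (fun y : ℝ => y ^ (p - q * b)) (Ioi 1) :=
      (integrableOn_Ioi_rpow_iff zero_lt_one).2 hpqb
    refine hg.mono' hmeas.restrict ?_
    filter_upwards [ae_restrict_mem measurableSet_Ioi] with y (hy : 1 < y)
    have hy0 : 0 < y := zero_lt_one.trans hy
    rw [norm_of_nonneg (by positivity), sub_eq_add_neg, rpow_add hy0]
    exact mul_le_mul_of_nonneg_left (one_add_rpow_rpow_neg_le hy0 hb) (rpow_nonneg hy0.le p)
  simpa only [Ioc_union_Ioi_eq_Ioi zero_le_one] using near_zero.union near_top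

lemma hasDerivAt_one_add_rpow_rpow {y q c : ℝ} (hy : 0 < y) :
    HasDerivAt (fun y : ℝ => (1 + y ^ q) ^ c)
      (c * q * y ^ (q - 1) * (1 + y ^ q) ^ (c - 1)) y := by
  have hv : 0 < 1 + y ^ q := by have := rpow_pos_of_pos hy q; linarith
  convert ((hasDerivAt_rpow_const (p := q) (Or.inl hy.ne')).const_add 1).rpow_const
    (p := c) (Or.inl hv.ne') using 1
  ring

lemma mul_integral_Ioi_rpow_mul_one_add_rpow_rpow_neg {p q b : ℝ} (hp : 0 < p) (hq : 0 < q)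
    (hpqb : p < (b - 1) * q) :
    p * ∫ y in Ioi 0, y ^ (p - 1) * (1 + y ^ q) ^ (-b)
      = ((b - 1) * q - p) * ∫ y in Ioi 0, y ^ (p + q - 1) * (1 + y ^ q) ^ (-b) := by
  have hb : 0 ≤ b - 1 := by nlinarith
  have hint₁ : IntegrableOn (fun y : ℝ => y ^ (p - 1) * (1 + y ^ q) ^ (-b)) (Ioi 0) :=
    integrableOn_Ioi_rpow_mul_one_add_rpow_rpow_neg (by linarith) (by linarith) (by linarith)
  have hint₂ : IntegrableOn (fun y : ℝ => y ^ (p + q - 1) * (1 + y ^ q) ^ (-b)) (Ioi 0) :=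
    integrableOn_Ioi_rpow_mul_one_add_rpow_rpow_neg (by linarith) (by linarith) (by linarith)
  set H : ℝ → ℝ := fun y => y ^ p * (1 + y ^ q) ^ (1 - b)
  have hderiv : ∀ y ∈ Ioi (0 : ℝ), HasDerivAt H
      (p * (y ^ (p - 1) * (1 + y ^ q) ^ (-b))
        - ((b - 1) * q - p) * (y ^ (p + q - 1) * (1 + y ^ q) ^ (-b))) y := by
    intro y (hy : 0 < y)
    have hv : 0 < 1 + y ^ q := by have := rpow_pos_of_pos hy q; linarith
    refine ((hasDerivAt_rpow_const (p := p) (Or.inl hy.ne')).mul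
      (hasDerivAt_one_add_rpow_rpow (q := q) (c := 1 - b) hy)).congr_deriv ?_
    have e₁ : (1 + y ^ q) ^ (1 - b) = (1 + y ^ q) * (1 + y ^ q) ^ (-b) := by
      rw [sub_eq_add_neg, rpow_add hv, rpow_one]
    have e₂ : y ^ (p + q - 1) = y ^ (p - 1) * y ^ q := by
      rw [← rpow_add hy]; ring_nf
    have e₃ : y ^ p * y ^ (q - 1) = y ^ (p - 1) * y ^ q := by
      rw [← rpow_add hy, ← rpow_add hy]; ring_nf
    rw [e₁, e₂, show 1 - b - 1 = -b by ring]
    linear_combination ((1 - b) * q * (1 + y ^ q) ^ (-b)) * e₃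
  have hcont : ContinuousWithinAt H (Ici 0) 0 := by
    refine ((continuousAt_rpow_const _ _ (Or.inr hp.le)).mul ?_).continuousWithinAt
    refine ((continuousAt_rpow_const _ _ (Or.inr hq.le)).const_add 1).rpow_const (Or.inl ?_)
    simp [zero_rpow hq.ne']
  have hlim : Tendsto H atTop (nhds 0) := by
    have hdecay : Tendsto (fun y : ℝ => y ^ (-((b - 1) * q - p))) atTop (nhds 0) :=
      tendsto_rpow_neg_atTop (by linarith)
    refine tendsto_of_tendsto_of_tendsto_of_le_of_le' tendsto_const_nhds hdecay ?_ ?_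
    · filter_upwards [eventually_gt_atTop 0] with y hy
      positivity
    · filter_upwards [eventually_gt_atTop 0] with y hy
      calc H y ≤ y ^ p * y ^ (-(q * (b - 1))) := by
            simp only [H, show 1 - b = -(b - 1) by ring]
            exact mul_le_mul_of_nonneg_left (one_add_rpow_rpow_neg_le hy hb) (by positivity)
        _ = y ^ (-((b - 1) * q - p)) := by rw [← rpow_add hy]; ring_nf
  have hibp := integral_Ioi_of_hasDerivAt_of_tendsto hcont hderiv
    ((hint₁.const_mul p).sub (hint₂.const_mul _)) hlim
  rw [integral_sub (hint₁.const_mul p) (hint₂.const_mul _), integral_const_mul,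
    integral_const_mul] at hibp
  have hH0 : H 0 = 0 := by simp [H, zero_rpow hp.ne']
  linarith

lemma norm_gradient_comp_norm {E : Type*} [NormedAddCommGroup E] [InnerProductSpace ℝ E]
    [CompleteSpace E] {f : ℝ → ℝ} {f' : ℝ} {x : E} (hx : x ≠ 0) (hf : HasDerivAt f f' ‖x‖) :
    ‖gradient (fun X => f ‖X‖) x‖ = |f'| := by
  have : Nontrivial E := nontrivial_of_ne x 0 hx
  have hnorm : DifferentiableAt ℝ (‖·‖) x := differentiableAt_id.norm ℝ hx
  have hcomp : HasFDerivAt (fun X => f ‖X‖) (f' • fderiv ℝ (‖·‖) x) x :=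
    hf.comp_hasFDerivAt x hnorm.hasFDerivAt
  rw [gradient, LinearIsometryEquiv.norm_map, hcomp.fderiv, norm_smul, norm_fderiv_norm hnorm,
    mul_one, norm_eq_abs]

section Profile

variable {a s : ℝ}

lemma norm_gradient_one_add_norm_rpow_rpow {E : Type*} [NormedAddCommGroup E]
    [InnerProductSpace ℝ E] [CompleteSpace E] (ha : 2 ≤ a) (hs : s < 2) {x : E} (hx : x ≠ 0) :
    ‖gradient (fun X : E => (1 + ‖X‖ ^ (2 - s)) ^ (-((a - 2) / (2 - s)))) x‖
      = (a - 2) * ‖x‖ ^ (1 - s) * (1 + ‖x‖ ^ (2 - s)) ^ (-((a - s) / (2 - s))) := by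
  have hq : 0 < 2 - s := by linarith
  rw [norm_gradient_comp_norm hx (hasDerivAt_one_add_rpow_rpow (norm_pos_iff.2 hx)),
    neg_mul, neg_mul, neg_mul, abs_neg, div_mul_cancel₀ _ hq.ne', abs_of_nonneg (by positivity),
    show 2 - s - 1 = 1 - s by ring,
    show -((a - 2) / (2 - s)) - 1 = -((a - s) / (2 - s)) by field_simp; ring]

lemma rpow_mul_sq_gradient_profile {y : ℝ} (hy : 0 < y) :
    y ^ (a - 1) * ((a - 2) * y ^ (1 - s) * (1 + y ^ (2 - s)) ^ (-((a - s) / (2 - s)))) ^ 2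
      = (a - 2) ^ 2
        * (y ^ ((a - s) + (2 - s) - 1) * (1 + y ^ (2 - s)) ^ (-(2 * (a - s) / (2 - s)))) := by
  have hv : 0 < 1 + y ^ (2 - s) := by positivity
  have hy' : y ^ (a - 1) * (y ^ (1 - s)) ^ 2 = y ^ ((a - s) + (2 - s) - 1) := by
    rw [← rpow_two, ← rpow_mul hy.le, ← rpow_add hy]
    ring_nf
  have hv' : ((1 + y ^ (2 - s)) ^ (-((a - s) / (2 - s)))) ^ 2
      = (1 + y ^ (2 - s)) ^ (-(2 * (a - s) / (2 - s))) := by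
    rw [← rpow_two, ← rpow_mul hv.le]
    ring_nf
  rw [mul_pow, mul_pow, hv', ← hy']
  ring

lemma rpow_mul_weight_mul_profile_rpow (hs : s < 2) (ha : a ≠ 2) {y : ℝ} (hy : 0 < y) :
    y ^ (a - 1) * (y ^ (-s) * ((1 + y ^ (2 - s)) ^ (-((a - 2) / (2 - s)))) ^ (2 * (a - s) / (a - 2)))
      = y ^ ((a - s) - 1) * (1 + y ^ (2 - s)) ^ (-(2 * (a - s) / (2 - s))) := by
  have hq : 2 - s ≠ 0 := by linarith
  have hv : 0 < 1 + y ^ (2 - s) := by positivity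
  have hy' : y ^ (a - 1) * y ^ (-s) = y ^ ((a - s) - 1) := by
    rw [← rpow_add hy]
    ring_nf
  have hv' : ((1 + y ^ (2 - s)) ^ (-((a - 2) / (2 - s)))) ^ (2 * (a - s) / (a - 2))
      = (1 + y ^ (2 - s)) ^ (-(2 * (a - s) / (2 - s))) := by
    rw [← rpow_mul hv.le]
    congr 1
    field_simp [sub_ne_zero.2 ha]
  rw [hv', ← hy']
  ring

lemma integral_rpow_mul_sq_gradient_profile (ha : 2 < a) (hs : s < 2) :
    ∫ y in Ioi 0, y ^ (a - 1)
        * ((a - 2) * y ^ (1 - s) * (1 + y ^ (2 - s)) ^ (-((a - s) / (2 - s)))) ^ 2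
      = (a - 2) * (a - s) * ∫ y in Ioi 0, y ^ (a - 1)
        * (y ^ (-s) * ((1 + y ^ (2 - s)) ^ (-((a - 2) / (2 - s)))) ^ (2 * (a - s) / (a - 2))) := by
  have hq : 0 < 2 - s := by linarith
  have hrec := mul_integral_Ioi_rpow_mul_one_add_rpow_rpow_neg (p := a - s) (q := 2 - s)
    (b := 2 * (a - s) / (2 - s)) (by linarith) hq
    (by rw [sub_one_mul, div_mul_cancel₀ _ hq.ne']; linarith)
  rw [sub_one_mul, div_mul_cancel₀ _ hq.ne', show 2 * (a - s) - (2 - s) - (a - s) = a - 2 by ring]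
    at hrec
  rw [setIntegral_congr_fun measurableSet_Ioi fun y hy => rpow_mul_sq_gradient_profile hy,
    setIntegral_congr_fun measurableSet_Ioi
      fun y hy => rpow_mul_weight_mul_profile_rpow hs (by linarith) hy,
    integral_const_mul]
  linear_combination (-(a - 2)) * hrec

end Profile

theorem stmt_6 (n : ℕ) (hn : 3 ≤ n) (s : ℝ) (hs : s ∈ Set.Ioo (0:ℝ) 2)
    (Φ : EuclideanSpace ℝ (Fin n) → ℝ)
    (hΦ : ∀ X, Φ X = (1 + ‖X‖ ^ (2 - s)) ^ (-(((n:ℝ) - 2) / (2 - s)))) :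
    (∫ X : EuclideanSpace ℝ (Fin n), ‖gradient Φ X‖ ^ 2)
      = ((n:ℝ) - 2) * ((n:ℝ) - s)
        * ∫ X : EuclideanSpace ℝ (Fin n),
            ‖X‖ ^ (-s) * (Φ X) ^ (2 * ((n:ℝ) - s) / ((n:ℝ) - 2)) := by
  have hn' : (3 : ℝ) ≤ n := by exact_mod_cast hn
  have : Nontrivial (EuclideanSpace ℝ (Fin n)) :=
    Module.nontrivial_of_finrank_pos (R := ℝ) (by rw [finrank_euclideanSpace_fin]; omega)
  have hgrad : ∀ᵐ X : EuclideanSpace ℝ (Fin n), ‖gradient Φ X‖ ^ 2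
      = ((n - 2) * ‖X‖ ^ (1 - s) * (1 + ‖X‖ ^ (2 - s)) ^ (-((n - s) / (2 - s)))) ^ 2 := by
    filter_upwards [volume.ae_ne 0] with X hX
    rw [show Φ = _ from funext hΦ, norm_gradient_one_add_norm_rpow_rpow (by linarith) hs.2 hX]
  have hpow : ∀ y : ℝ, y ^ (n - 1) = y ^ ((n : ℝ) - 1) := fun y => by
    rw [← rpow_natCast, Nat.cast_sub (by omega), Nat.cast_one]
  simp only [integral_congr_ae hgrad, hΦ]
  rw [integral_fun_norm_addHaar volume (fun r => ((n - 2) * r ^ (1 - s)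
      * (1 + r ^ (2 - s)) ^ (-((n - s) / (2 - s)))) ^ 2),
    integral_fun_norm_addHaar volume (fun r => r ^ (-s)
      * ((1 + r ^ (2 - s)) ^ (-((n - 2) / (2 - s)))) ^ (2 * ((n:ℝ) - s) / ((n:ℝ) - 2)))]
  simp only [finrank_euclideanSpace_fin, smul_eq_mul, nsmul_eq_mul, hpow,
    integral_rpow_mul_sq_gradient_profile (by linarith : (2:ℝ) < n) hs.2]
  ring
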